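/- For every n ≥ 1, a permutation π ∈ S_{n+1} is 1-almost-increasing if and only if there exist a 1-almost-increasing permutation σ ∈ S_n and indices i, j ∈ {1, 2} such that π = ρ_{i,j}(σ). -/

import Mathlib

/-- `w` contains the pattern `p` (both given in one-line notation):
there is a subsequence of `w` whose entries are in the same relative order
as the entries of `p`. -/
def ContainsPattern (w p : List ℕ) : Prop :=
  ∃ s : List ℕ, s.Sublist w ∧ s.length = p.length ∧
    ∀ a b : ℕ, a < p.length → b < p.length →
      (s.getD a 0 < s.getD b 0 ↔ p.getD a 0 < p.getD b 0)

/-- `w` avoids the pattern `p`. -/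
def Avoids (w p : List ℕ) : Prop := ¬ ContainsPattern w p

/-- `w` is the one-line notation of a permutation of `{1, …, n}`. -/
def IsPermList (n : ℕ) (w : List ℕ) : Prop := w.Perm (List.range' 1 n)

/-- A permutation is rectangular if it avoids 2413, 2431, 4213 and 4231. -/
def Rectangular (w : List ℕ) : Prop :=
  Avoids w [2,4,1,3] ∧ Avoids w [2,4,3,1] ∧ Avoids w [4,2,1,3] ∧ Avoids w [4,2,3,1]

/-- A permutation is evil-avoiding if it avoids 2413, 4132, 4213 and 3214. -/
def EvilAvoiding (w : List ℕ) : Prop :=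
  Avoids w [2,4,1,3] ∧ Avoids w [4,1,3,2] ∧ Avoids w [4,2,1,3] ∧ Avoids w [3,2,1,4]

/-- The number of recoils of `w`: the number of values `i ∈ {1,…,n-1}`
that occur after `i+1` in the one-line notation `w`. -/
def recoils (w : List ℕ) : ℕ :=
  ((Finset.Icc 1 (w.length - 1)).filter (fun i => w.idxOf (i+1) < w.idxOf i)).card

/-- The insertion operator ρ_{i,j} (with 1-indexed position `j`): increment by 1
every value of `w` that is ≥ i, then insert the value `i` in position `j`. -/
def insOp (i j : ℕ) (w : List ℕ) : List ℕ :=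
  List.insertIdx (w.map (fun v => if i ≤ v then v + 1 else v)) (j-1) i

/-- A permutation is 1-almost-increasing if it avoids 4321, 4312, 3421 and 3412. -/
def AlmostIncreasing (w : List ℕ) : Prop :=
  Avoids w [4,3,2,1] ∧ Avoids w [4,3,1,2] ∧ Avoids w [3,4,2,1] ∧ Avoids w [3,4,1,2]

/-!
A permutation is 1-almost-increasing iff it has no *block inversion*: entries `a, b` followed by
entries `c, d` with `max c d < min a b` (the four forbidden patterns are the four relative orders
of such a block). Block inversions pass to subsequences and pull back along monotone relabellings
of the values.

If `π` has no block inversion, then `1` or `2` is among its first two entries, since otherwise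
these two entries followed by the entries `1, 2` form one; deleting that entry and standardizing
gives `σ` with `π = ρ_{i,j}(σ)`. Conversely, a block inversion of `ρ_{i,j}(σ)` with `i, j ≤ 2`
avoids the inserted entry, so it comes from one of `σ`.
-/

namespace List

variable {α : Type*}

theorem pair_sublist_or_of_mem {a b : α} {l : List α} (ha : a ∈ l) (hb : b ∈ l) (hab : a ≠ b) :
    [a, b] <+ l ∨ [b, a] <+ l := by
  induction l with
  | nil => simp at ha
  | cons x t ih =>
    rcases mem_cons.mp ha with rfl | ha'
    · exact .inl ((singleton_sublist.mpr ((mem_cons.mp hb).resolve_left hab.symm)).cons_cons a)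
    rcases mem_cons.mp hb with rfl | hb'
    · exact .inr ((singleton_sublist.mpr ha').cons_cons b)
    exact (ih ha' hb').imp (·.cons x) (·.cons x)

theorem not_mem_drop_insertIdx {a : α} {l : List α} (h : a ∉ l) (k : ℕ) :
    a ∉ (l.insertIdx k a).drop (k + 1) := by
  induction l generalizing k with
  | nil => cases k <;> simp
  | cons x t ih =>
    cases k with
    | zero => simpa using h
    | succ k => simpa [insertIdx_succ_cons] using ih (not_mem_of_not_mem_cons h) k

variable [BEq α] [LawfulBEq α]

theorem erase_insertIdx_of_not_mem {a : α} {l : List α} (h : a ∉ l) (k : ℕ) :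
    (l.insertIdx k a).erase a = l := by
  induction l generalizing k with
  | nil => cases k <;> simp
  | cons x t ih =>
    cases k with
    | zero => simp
    | succ k =>
      simp [insertIdx_succ_cons, Ne.symm (ne_of_not_mem_cons h),
        ih (not_mem_of_not_mem_cons h) k]

end List

theorem isPermList_iff {n : ℕ} {w : List ℕ} :
    IsPermList n w ↔ w.Nodup ∧ ∀ x, x ∈ w ↔ 1 ≤ x ∧ x ≤ n := by
  have hrange : ∀ x, x ∈ List.range' 1 n ↔ 1 ≤ x ∧ x ≤ n := by
    intro x; rw [List.mem_range'_1]; omega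
  constructor
  · intro h
    exact ⟨h.nodup_iff.mpr List.nodup_range', fun x => (h.mem_iff).trans (hrange x)⟩
  · rintro ⟨hnd, hmem⟩
    exact (List.perm_ext_iff_of_nodup hnd List.nodup_range').mpr
      fun x => (hmem x).trans (hrange x).symm

theorem monotone_ite_succ (i : ℕ) : Monotone fun v : ℕ => if i ≤ v then v + 1 else v := by
  intro x y h; dsimp only; split_ifs <;> omega

theorem monotone_ite_pred (i : ℕ) : Monotone fun v : ℕ => if i < v then v - 1 else v := by
  intro x y h; dsimp only; split_ifs <;> omega

def HasBlockInversion (w : List ℕ) : Prop :=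
  ∃ a b c d : ℕ, [a, b, c, d].Sublist w ∧ c < a ∧ d < a ∧ c < b ∧ d < b

namespace HasBlockInversion

theorem of_sublist {l w : List ℕ} (hl : l.Sublist w) : HasBlockInversion l → HasBlockInversion w :=
  fun ⟨a, b, c, d, hs, hca, hda, hcb, hdb⟩ => ⟨a, b, c, d, hs.trans hl, hca, hda, hcb, hdb⟩

theorem of_map {l : List ℕ} {f : ℕ → ℕ} (hf : Monotone f) :
    HasBlockInversion (l.map f) → HasBlockInversion l := by
  rintro ⟨a, b, c, d, hs, hca, hda, hcb, hdb⟩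
  obtain ⟨l', hl', heq⟩ := List.sublist_map_iff.mp hs
  rcases l' with _ | ⟨a', _ | ⟨b', _ | ⟨c', _ | ⟨d', _ | _⟩⟩⟩⟩ <;>
    simp only [List.map_cons, List.map_nil, List.cons.injEq, List.nil_eq, reduceCtorEq, and_false,
      and_true] at heq
  obtain ⟨rfl, rfl, rfl, rfl⟩ := heq
  exact ⟨a', b', c', d', hl', hf.reflect_lt hca, hf.reflect_lt hda, hf.reflect_lt hcb,
    hf.reflect_lt hdb⟩

theorem of_containsPattern {w p : List ℕ}
    (hp : p ∈ [[4, 3, 2, 1], [4, 3, 1, 2], [3, 4, 2, 1], [3, 4, 1, 2]])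
    (h : ContainsPattern w p) : HasBlockInversion w := by
  obtain ⟨s, hs, hlen, hrel⟩ := h
  simp only [List.mem_cons, List.not_mem_nil, or_false] at hp
  rcases hp with rfl | rfl | rfl | rfl <;>
  · rcases s with _ | ⟨a, _ | ⟨b, _ | ⟨c, _ | ⟨d, _ | _⟩⟩⟩⟩ <;> simp at hlen
    exact ⟨a, b, c, d, hs, (hrel 2 0 (by decide) (by decide)).mpr (by decide),
      (hrel 3 0 (by decide) (by decide)).mpr (by decide),
      (hrel 2 1 (by decide) (by decide)).mpr (by decide),
      (hrel 3 1 (by decide) (by decide)).mpr (by decide)⟩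

end HasBlockInversion

theorem almostIncreasing_iff_not_hasBlockInversion {w : List ℕ} (hw : w.Nodup) :
    AlmostIncreasing w ↔ ¬ HasBlockInversion w := by
  constructor
  · rintro ⟨h4321, h4312, h3421, h3412⟩ ⟨a, b, c, d, hs, hca, hda, hcb, hdb⟩
    obtain ⟨hab, hcd⟩ : a ≠ b ∧ c ≠ d := by
      have hnd := hs.nodup hw
      simp only [List.nodup_cons, List.mem_cons, List.not_mem_nil, or_false] at hnd
      omega
    have hblock : ∀ p : List ℕ, p.length = 4 → (∀ x y, x < 4 → y < 4 →
        ([a, b, c, d].getD x 0 < [a, b, c, d].getD y 0 ↔ p.getD x 0 < p.getD y 0)) →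
        ContainsPattern w p :=
      fun p hp hrel => ⟨[a, b, c, d], hs, hp.symm, fun x y hx hy => hrel x y (hp ▸ hx) (hp ▸ hy)⟩
    rcases lt_or_gt_of_ne hab with hab | hab <;>
      rcases lt_or_gt_of_ne hcd with hcd | hcd <;>
      [apply h3412; apply h3421; apply h4312; apply h4321] <;>
      refine hblock _ rfl fun x y hx hy => ?_ <;>
      interval_cases x <;> interval_cases y <;>
      simp only [List.getD_cons_zero, List.getD_cons_succ] <;> omega
  · intro h
    refine ⟨fun hc => h (.of_containsPattern ?_ hc), fun hc => h (.of_containsPattern ?_ hc),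
      fun hc => h (.of_containsPattern ?_ hc), fun hc => h (.of_containsPattern ?_ hc)⟩ <;> simp

def delOp (i : ℕ) (w : List ℕ) : List ℕ :=
  (w.erase i).map fun x => if i < x then x - 1 else x

theorem isPermList_delOp {n i : ℕ} {w : List ℕ} (hw : IsPermList (n + 1) w) (hi : i ∈ w) :
    IsPermList n (delOp i w) := by
  obtain ⟨hnd, hmem⟩ := isPermList_iff.mp hw
  have hi' := (hmem i).mp hi
  refine isPermList_iff.mpr ⟨(hnd.erase i).map_on fun x hx y hy hxy => ?_, fun z => ?_⟩
  · have := ((hnd.mem_erase_iff).mp hx).1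
    have := ((hnd.mem_erase_iff).mp hy).1
    split_ifs at hxy <;> omega
  · simp only [delOp, List.mem_map, hnd.mem_erase_iff, hmem]
    constructor
    · rintro ⟨x, ⟨hxi, hx⟩, rfl⟩
      split_ifs <;> omega
    · intro hz
      refine ⟨if i ≤ z then z + 1 else z, ?_, ?_⟩ <;> split_ifs <;> omega

theorem insOp_delOp {i : ℕ} {w : List ℕ} (hw : w.Nodup) (hi : i ∈ w) :
    insOp i (w.idxOf i + 1) (delOp i w) = w := by
  have hiw : w.idxOf i < w.length := List.idxOf_lt_length_iff.mpr hi
  have hmap : ∀ x ∈ w.erase i, ((fun v => if i ≤ v then v + 1 else v) ∘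
      (fun x => if i < x then x - 1 else x)) x = id x := by
    intro x hx
    have := ((hw.mem_erase_iff).mp hx).1
    simp only [Function.comp_apply, id_eq]
    split_ifs <;> omega
  unfold insOp delOp
  rw [List.map_map, List.map_congr_left hmap, List.map_id, Nat.add_sub_cancel,
    ← List.eraseIdx_idxOf_eq_erase]
  conv_rhs => rw [← List.insertIdx_eraseIdx_getElem hiw, List.getElem_idxOf hiw]

theorem exists_idxOf_lt_two {n : ℕ} {w : List ℕ} (hn : 1 ≤ n) (hw : IsPermList (n + 1) w)
    (h : ¬ HasBlockInversion w) : ∃ i ∈ ({1, 2} : Set ℕ), w.idxOf i < 2 := by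
  obtain ⟨hnd, hmem⟩ := isPermList_iff.mp hw
  obtain ⟨x, y, t, rfl⟩ : ∃ x y t, w = x :: y :: t := by
    have hlen := hw.length_eq
    rcases w with _ | ⟨x, _ | ⟨y, t⟩⟩ <;>
      simp only [List.length_cons, List.length_nil, List.length_range'] at hlen
    · omega
    · omega
    · exact ⟨x, y, t, rfl⟩
  by_contra! hlate
  simp only [Set.mem_insert_iff, Set.mem_singleton_iff, forall_eq_or_imp, forall_eq,
    List.idxOf_cons, cond_eq_ite, beq_iff_eq] at hlate
  obtain ⟨hx1, hy1⟩ : x ≠ 1 ∧ y ≠ 1 := by split_ifs at hlate <;> omega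
  obtain ⟨hx2, hy2⟩ : x ≠ 2 ∧ y ≠ 2 := by split_ifs at hlate <;> omega
  have h1 : 1 ∈ t := by simpa [hx1.symm, hy1.symm] using (hmem 1).mpr ⟨le_rfl, by omega⟩
  have h2 : 2 ∈ t := by simpa [hx2.symm, hy2.symm] using (hmem 2).mpr ⟨by omega, by omega⟩
  have hx := (hmem x).mp (by simp)
  have hy := (hmem y).mp (by simp)
  rcases List.pair_sublist_or_of_mem h1 h2 (by omega) with ht | ht
  · exact h ⟨x, y, 1, 2, (ht.cons_cons y).cons_cons x, by omega, by omega, by omega, by omega⟩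
  · exact h ⟨x, y, 2, 1, (ht.cons_cons y).cons_cons x, by omega, by omega, by omega, by omega⟩

/-- The inserted entry `i` cannot be a low entry of a block inversion, since it sits at position
`j ≤ 2`, nor a high one, since at most one positive value lies below `i ≤ 2`. -/
theorem HasBlockInversion.of_insOp {i j : ℕ} {v : List ℕ} (hi : i ≤ 2) (hj : j ≤ 2)
    (hnd : (insOp i j v).Nodup) (hpos : ∀ x ∈ insOp i j v, 1 ≤ x)
    (h : HasBlockInversion (insOp i j v)) : HasBlockInversion v := by
  obtain ⟨a, b, c, d, hs, hca, hda, hcb, hdb⟩ := h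
  have hiv : i ∉ v.map fun v => if i ≤ v then v + 1 else v := by
    simp only [List.mem_map, not_exists, not_and]
    intro x _
    split_ifs <;> omega
  have hlow : i ∉ [c, d] := fun hcd =>
    List.not_mem_drop_insertIdx hiv (j - 1) <|
      ((hs.drop 2).trans (List.drop_sublist_drop_left _ (by omega))).subset hcd
  have hhigh : i ≠ a ∧ i ≠ b := by
    have hcd := hs.nodup hnd
    simp only [List.nodup_cons, List.mem_cons, List.not_mem_nil, or_false] at hcd
    have := hpos c (hs.subset (by simp))
    have := hpos d (hs.subset (by simp))
    omega
  have hs' : [a, b, c, d].Sublist (v.map fun v => if i ≤ v then v + 1 else v) := by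
    have hi_notin : i ∉ [a, b, c, d] := by simp_all [eq_comm]
    rw [← List.erase_insertIdx_of_not_mem hiv (j - 1), ← List.erase_of_not_mem hi_notin]
    exact hs.erase i
  exact of_map (monotone_ite_succ i) ⟨a, b, c, d, hs', hca, hda, hcb, hdb⟩

/-- For every `n ≥ 1`, a permutation `π ∈ S_{n+1}` is 1-almost-increasing iff there
exist a 1-almost-increasing permutation `σ ∈ S_n` and indices `i, j ∈ {1, 2}` such
that `π = ρ_{i,j}(σ)`. -/
theorem almostIncreasing_iff_insOp (n : ℕ) (hn : 1 ≤ n) (w : List ℕ)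
    (hperm : IsPermList (n + 1) w) :
    AlmostIncreasing w ↔
      ∃ v : List ℕ, IsPermList n v ∧ AlmostIncreasing v ∧
        ∃ i ∈ ({1, 2} : Set ℕ), ∃ j ∈ ({1, 2} : Set ℕ), w = insOp i j v := by
  obtain ⟨hnd, hmem⟩ := isPermList_iff.mp hperm
  rw [almostIncreasing_iff_not_hasBlockInversion hnd]
  constructor
  · intro hw
    obtain ⟨i, hi, hidx⟩ := exists_idxOf_lt_two hn hperm hw
    have hiw : i ∈ w := (hmem i).mpr (by rcases hi with rfl | rfl <;> omega)
    have hv := isPermList_delOp hperm hiw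
    refine ⟨delOp i w, hv, ?_, i, hi, w.idxOf i + 1,
      by simp only [Set.mem_insert_iff, Set.mem_singleton_iff]; omega, (insOp_delOp hnd hiw).symm⟩
    rw [almostIncreasing_iff_not_hasBlockInversion (isPermList_iff.mp hv).1]
    exact fun h => hw ((h.of_map (monotone_ite_pred i)).of_sublist w.erase_sublist)
  · rintro ⟨v, hv, hvai, i, hi, j, hj, rfl⟩
    simp only [Set.mem_insert_iff, Set.mem_singleton_iff] at hi hj
    rw [almostIncreasing_iff_not_hasBlockInversion (isPermList_iff.mp hv).1] at hvai
    exact fun h => hvai (h.of_insOp (by omega) (by omega) hnd fun x hx => ((hmem x).mp hx).1)
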